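/- The Legendre transform (convex conjugate) of the function f(q) = (1/2)(|q₄| + √(q₂² + q₃²))² on ℝ⁴ is f*(p) = (1/2)·max{p₂² + p₃², p₄²} when p₁ = 0, and f*(p) = +∞ when p₁ ≠ 0. -/
import Mathlib


/-- The function f(q) = (1/2)(|q₄| + √(q₂² + q₃²))² on ℝ⁴ (indices 0,1,2,3 for q₁,q₂,q₃,q₄). -/
noncomputable def fQuad (q : Fin 4 → ℝ) : ℝ :=
  (1/2) * (|q 3| + Real.sqrt ((q 1)^2 + (q 2)^2))^2

noncomputable def dot4 (p q : Fin 4 → ℝ) : ℝ := ∑ i, p i * q i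

theorem legendre_transform_fQuad (p : Fin 4 → ℝ) :
    (p 0 = 0 →
      IsLUB {y : ℝ | ∃ q : Fin 4 → ℝ, y = dot4 p q - fQuad q}
        ((1/2) * max ((p 1)^2 + (p 2)^2) ((p 3)^2))) ∧
    (p 0 ≠ 0 → ¬ BddAbove {y : ℝ | ∃ q : Fin 4 → ℝ, y = dot4 p q - fQuad q}) := by
  constructor
  · intro hp0
    have ha2 : (Real.sqrt ((p 1)^2 + (p 2)^2))^2 = (p 1)^2 + (p 2)^2 :=
      Real.sq_sqrt (by positivity)
    have ha0 : 0 ≤ Real.sqrt ((p 1)^2 + (p 2)^2) := Real.sqrt_nonneg _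
    constructor
    · rintro y ⟨q, rfl⟩
      simp only [dot4, fQuad, Fin.sum_univ_four, hp0, zero_mul, zero_add]
      set a := Real.sqrt ((p 1)^2 + (p 2)^2) with ha
      set r := Real.sqrt ((q 1)^2 + (q 2)^2) with hrdef
      have hr0 : 0 ≤ r := Real.sqrt_nonneg _
      have hr2 : r^2 = (q 1)^2 + (q 2)^2 := Real.sq_sqrt (by positivity)
      have h1 : p 1 * q 1 + p 2 * q 2 ≤ a * r := by
        nlinarith [sq_nonneg (p 1 * q 2 - p 2 * q 1), mul_nonneg ha0 hr0,
          sq_nonneg (a * r - (p 1 * q 1 + p 2 * q 2))]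
      have h2 : p 3 * q 3 ≤ |p 3| * |q 3| := by
        calc p 3 * q 3 ≤ |p 3 * q 3| := le_abs_self _
        _ = |p 3| * |q 3| := abs_mul _ _
      have hq3 : 0 ≤ |q 3| := abs_nonneg _
      have hp3 : 0 ≤ |p 3| := abs_nonneg _
      have hp3sq : |p 3|^2 = (p 3)^2 := sq_abs _
      rcases le_total ((p 1)^2 + (p 2)^2) ((p 3)^2) with h | h
      · rw [max_eq_right h]
        have hale : a ≤ |p 3| := by
          rw [ha]
          calc Real.sqrt ((p 1)^2 + (p 2)^2) ≤ Real.sqrt ((p 3)^2) :=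
                Real.sqrt_le_sqrt h
          _ = |p 3| := Real.sqrt_sq_eq_abs _
        nlinarith [sq_nonneg (|p 3| - (r + |q 3|)), mul_le_mul_of_nonneg_right hale hr0]
      · rw [max_eq_left h]
        have hble : |p 3| ≤ a := by
          have : Real.sqrt ((p 3)^2) ≤ a := Real.sqrt_le_sqrt h
          rwa [Real.sqrt_sq_eq_abs] at this
        nlinarith [sq_nonneg (a - (r + |q 3|)), mul_le_mul_of_nonneg_right hble hq3]
    · intro b hb
      rcases le_total ((p 1)^2 + (p 2)^2) ((p 3)^2) with h | h
      · rw [max_eq_right h]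
        have : (1/2) * (p 3)^2 ∈ {y : ℝ | ∃ q : Fin 4 → ℝ, y = dot4 p q - fQuad q} := by
          refine ⟨![0, 0, 0, p 3], ?_⟩
          simp [dot4, fQuad, Fin.sum_univ_four, Real.sqrt_zero, sq_abs]
          ring
        exact hb this
      · rw [max_eq_left h]
        have : (1/2) * ((p 1)^2 + (p 2)^2) ∈
            {y : ℝ | ∃ q : Fin 4 → ℝ, y = dot4 p q - fQuad q} := by
          refine ⟨![0, p 1, p 2, 0], ?_⟩
          simp [dot4, fQuad, Fin.sum_univ_four, ha2]
          ring
        exact hb this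
  · intro hp0 hbdd
    obtain ⟨b, hb⟩ := hbdd
    have hmem : b + 1 ∈ {y : ℝ | ∃ q : Fin 4 → ℝ, y = dot4 p q - fQuad q} := by
      refine ⟨![(b+1)/p 0, 0, 0, 0], ?_⟩
      simp [dot4, fQuad, Fin.sum_univ_four, Real.sqrt_zero]
      field_simp
    have := hb hmem
    linarith
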